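/- arXiv:1603.03073 — 7 statements merged into one kernel-verified Lean document; each statement's English description precedes it below -/
import Mathlib

section
/- There exists an instance of house allocation with existing tenants under dichotomous preferences in which the maximum number of satisfied agents over all strongly individually rational allocations is strictly less than the maximum number of satisfied agents over all individually rational allocations. (For example: two agents, each endowed with a house unacceptable to himself, where one agent finds the other agent's house acceptable; the only S-IR allocation is the endowment with welfare 0, while an IR allocation achieves welfare 1.) -/
/-- An instance of house allocation with existing tenants under dichotomous
preferences: an endowment function `ω` assigning each agent at most one house
(no house owned by two distinct agents), and for each agent `i` a set `A i`
of acceptable houses. -/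
structure HAInstance (N H : Type*) where
  ω : N → Option H
  A : N → Set H
  ω_inj : ∀ i j : N, ∀ h : H, ω i = some h → ω j = some h → i = j

/-- An allocation assigns each agent at most one house, no two distinct agents
receiving the same house. -/
def IsAllocation {N H : Type*} (x : N → Option H) : Prop :=
  ∀ i j : N, ∀ h : H, x i = some h → x j = some h → i = j

/-- Agent `i` is satisfied by `x` if he receives an acceptable house. -/
def Satisfied {N H : Type*} (M : HAInstance N H) (x : N → Option H) (i : N) : Prop :=
  ∃ h : H, x i = some h ∧ h ∈ M.A i

/-- The welfare of an allocation: the number of satisfied agents. -/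
noncomputable def Welfare {N H : Type*} (M : HAInstance N H) (x : N → Option H) : ℕ :=
  Nat.card {i : N // Satisfied M x i}

/-- Individual rationality: every agent whose endowed house is acceptable to
him receives an acceptable house. -/
def IR {N H : Type*} (M : HAInstance N H) (x : N → Option H) : Prop :=
  ∀ i : N, (∃ h : H, M.ω i = some h ∧ h ∈ M.A i) → Satisfied M x i

/-- Strong individual rationality: every agent either keeps his endowment or
receives an acceptable house while his endowment was unacceptable. -/
def SIR {N H : Type*} (M : HAInstance N H) (x : N → Option H) : Prop :=
  ∀ i : N, x i = M.ω i ∨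
    (Satisfied M x i ∧ ¬ (∃ h : H, M.ω i = some h ∧ h ∈ M.A i))

/-- Coalition `S` blocks allocation `x`: there is an injective assignment `y`
on `S`, using only houses endowed by members of `S`, such that every member of
`S` gets an acceptable house under `y` while unsatisfied under `x`. -/
def Blocks {N H : Type*} (M : HAInstance N H) (x : N → Option H) (S : Set N) : Prop :=
  S.Nonempty ∧ ∃ y : N → H, Set.InjOn y S ∧
    ∀ i ∈ S, (∃ j ∈ S, M.ω j = some (y i)) ∧ y i ∈ M.A i ∧ ¬ Satisfied M x i

/-- An allocation is core stable if no coalition blocks it. -/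
def CoreStable {N H : Type*} (M : HAInstance N H) (x : N → Option H) : Prop :=
  ∀ S : Set N, ¬ Blocks M x S

/-- `y` Pareto dominates `x` if every agent satisfied by `x` is satisfied by
`y` and some agent is satisfied by `y` but not by `x`. -/
def ParetoDominates {N H : Type*} (M : HAInstance N H) (y x : N → Option H) : Prop :=
  (∀ i : N, Satisfied M x i → Satisfied M y i) ∧
    ∃ i : N, Satisfied M y i ∧ ¬ Satisfied M x i

/-! Two tenants each own a house they find unacceptable, and tenant `false` wants tenant `true`'s
house. Tenant `true` finds nothing acceptable, so strong individual rationality forces him to keep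
his house, which leaves tenant `false` unsatisfied as well. Handing that house to tenant `false` is
individually rational, vacuously since no endowment is acceptable, and satisfies one agent. -/

section General

variable {N H : Type*} {M : HAInstance N H} {x : N → Option H} {i : N}

theorem not_satisfied_of_acceptable_eq_empty (hA : M.A i = ∅) : ¬ Satisfied M x i := by
  rintro ⟨h, -, hh⟩
  simp [hA] at hh

theorem SIR.apply_eq_of_acceptable_eq_empty (hx : SIR M x) (hA : M.A i = ∅) : x i = M.ω i :=
  (hx i).resolve_right fun h => not_satisfied_of_acceptable_eq_empty hA h.1

theorem IR_of_forall_endowment_not_acceptable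
    (hω : ∀ j, ¬ ∃ h, M.ω j = some h ∧ h ∈ M.A j) : IR M x :=
  fun j hj => absurd hj (hω j)

theorem welfare_eq_zero_of_forall_not_satisfied (hx : ∀ j, ¬ Satisfied M x j) :
    Welfare M x = 0 :=
  have : IsEmpty {j // Satisfied M x j} := ⟨fun j => hx j j.2⟩
  Nat.card_of_isEmpty

theorem welfare_pos_of_satisfied [Finite N] (hi : Satisfied M x i) : 0 < Welfare M x :=
  have : Nonempty {j // Satisfied M x j} := ⟨⟨i, hi⟩⟩
  Nat.card_pos

end General

def twoTenants : HAInstance Bool Bool where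
  ω i := some i
  A i := if i then ∅ else {true}
  ω_inj _ _ _ hi hj := Option.some_injective _ (hi.trans hj.symm)

def twoTenants.transfer : Bool → Option Bool := fun i => if i then none else some true

theorem twoTenants.isAllocation_transfer : IsAllocation twoTenants.transfer := by
  intro i j h
  cases i <;> cases j <;> simp [twoTenants.transfer]

theorem twoTenants.endowment_not_acceptable (i : Bool) :
    ¬ ∃ h, twoTenants.ω i = some h ∧ h ∈ twoTenants.A i := by
  cases i <;> simp [twoTenants]

theorem twoTenants.satisfied_transfer : Satisfied twoTenants twoTenants.transfer false :=
  ⟨true, rfl, rfl⟩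

theorem twoTenants.not_satisfied_of_SIR {x : Bool → Option Bool} (hx : IsAllocation x)
    (hsir : SIR twoTenants x) (i : Bool) : ¬ Satisfied twoTenants x i := by
  have hkeep : x true = some true := hsir.apply_eq_of_acceptable_eq_empty rfl
  cases i
  · rintro ⟨h, hxh, hh⟩
    obtain rfl : h = true := hh
    exact Bool.false_ne_true (hx false true true hxh hkeep)
  · exact not_satisfied_of_acceptable_eq_empty rfl

/-- There is an instance in which some IR allocation has strictly
greater welfare than every S-IR allocation. -/
theorem sir_welfare_lt_ir_welfare :
    ∃ (N H : Type) (_ : Fintype N) (_ : Fintype H) (M : HAInstance N H)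
      (y : N → Option H), IsAllocation y ∧ IR M y ∧
        ∀ x : N → Option H, IsAllocation x → SIR M x →
          Welfare M x < Welfare M y := by
  refine ⟨Bool, Bool, inferInstance, inferInstance, twoTenants, twoTenants.transfer,
    twoTenants.isAllocation_transfer,
    IR_of_forall_endowment_not_acceptable twoTenants.endowment_not_acceptable,
    fun x hx hsir => ?_⟩
  calc Welfare twoTenants x = 0 :=
        welfare_eq_zero_of_forall_not_satisfied (twoTenants.not_satisfied_of_SIR hx hsir)
    _ < Welfare twoTenants twoTenants.transfer :=
        welfare_pos_of_satisfied twoTenants.satisfied_transfer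
end

section
/- For house allocation with existing tenants under dichotomous (1-0) preferences, any strongly individually rational allocation that maximizes the number of satisfied agents among all strongly individually rational allocations is core stable. -/
/-!
Every member of a blocking coalition is unsatisfied, so strong individual rationality forces
him to hold his own endowment. Hence the coalition's deviation only permutes houses its members
already hold: carrying it out inside the allocation keeps it an S-IR allocation, satisfies the
coalition and leaves everyone else untouched. The result Pareto dominates the original
allocation and so has strictly larger welfare.
-/

section Reallocation

variable {N H : Type*} {M : HAInstance N H} {x : N → Option H}

lemma SIR.eq_of_not_satisfied (hsir : SIR M x) {i : N} (hi : ¬ Satisfied M x i) :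
    x i = M.ω i :=
  (hsir i).resolve_right fun h => hi h.1

lemma ParetoDominates.welfare_lt [Finite N] {y : N → Option H} (h : ParetoDominates M y x) :
    Welfare M x < Welfare M y := by
  obtain ⟨hmono, i, hiy, hix⟩ := h
  have hsub : {i | Satisfied M x i} ⊂ {i | Satisfied M y i} :=
    ⟨hmono, fun hle => hix (hle hiy)⟩
  calc Welfare M x = {i | Satisfied M x i}.ncard := Nat.card_coe_set_eq _
    _ < {i | Satisfied M y i}.ncard := Set.ncard_lt_ncard hsub (Set.toFinite _)
    _ = Welfare M y := (Nat.card_coe_set_eq _).symm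

section Deviation

variable {S : Set N} [DecidablePred (· ∈ S)] {y : N → H}

lemma isAllocation_piecewise (hx : IsAllocation x) (hy : S.InjOn y)
    (hyS : ∀ i ∈ S, ∃ j ∈ S, x j = some (y i)) :
    IsAllocation (S.piecewise (fun i => some (y i)) x) := by
  intro i j h hi hj
  by_cases hiS : i ∈ S <;> by_cases hjS : j ∈ S <;> simp only [Set.piecewise, hiS, hjS] at hi hj
  · exact hy hiS hjS (Option.some_inj.mp (hi.trans hj.symm))
  · obtain ⟨k, hkS, hk⟩ := hyS i hiS
    exact absurd (hx j k h hj (hk.trans hi) ▸ hkS) hjS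
  · obtain ⟨k, hkS, hk⟩ := hyS j hjS
    exact absurd (hx i k h hi (hk.trans hj) ▸ hkS) hiS
  · exact hx i j h hi hj

lemma sir_piecewise (hsir : SIR M x) (hyA : ∀ i ∈ S, y i ∈ M.A i)
    (hS : ∀ i ∈ S, ¬ Satisfied M x i) :
    SIR M (S.piecewise (fun i => some (y i)) x) := by
  intro i
  by_cases hiS : i ∈ S
  · right
    refine ⟨⟨y i, Set.piecewise_eq_of_mem _ _ _ hiS, hyA i hiS⟩, ?_⟩
    rintro ⟨h, hωi, hA⟩
    exact hS i hiS ⟨h, (hsir.eq_of_not_satisfied (hS i hiS)).trans hωi, hA⟩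
  · have hzi := S.piecewise_eq_of_notMem (fun i => some (y i)) x hiS
    rw [Satisfied, hzi]
    exact hsir i

lemma paretoDominates_piecewise (hne : S.Nonempty) (hyA : ∀ i ∈ S, y i ∈ M.A i)
    (hS : ∀ i ∈ S, ¬ Satisfied M x i) :
    ParetoDominates M (S.piecewise (fun i => some (y i)) x) x := by
  refine ⟨fun i hi => ?_, ?_⟩
  · have hiS : i ∉ S := fun hiS => hS i hiS hi
    rwa [Satisfied, Set.piecewise_eq_of_notMem _ _ _ hiS]
  · obtain ⟨i, hiS⟩ := hne
    exact ⟨i, ⟨y i, Set.piecewise_eq_of_mem _ _ _ hiS, hyA i hiS⟩, hS i hiS⟩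

end Deviation

lemma Blocks.exists_paretoDominates (hx : IsAllocation x) (hsir : SIR M x) {S : Set N}
    (hB : Blocks M x S) :
    ∃ z, IsAllocation z ∧ SIR M z ∧ ParetoDominates M z x := by
  classical
  obtain ⟨hne, y, hy, hyS⟩ := hB
  have hunsat : ∀ i ∈ S, ¬ Satisfied M x i := fun i hi => (hyS i hi).2.2
  have hheld : ∀ i ∈ S, ∃ j ∈ S, x j = some (y i) := fun i hi => by
    obtain ⟨j, hjS, hj⟩ := (hyS i hi).1
    exact ⟨j, hjS, (hsir.eq_of_not_satisfied (hunsat j hjS)).trans hj⟩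
  have hyA : ∀ i ∈ S, y i ∈ M.A i := fun i hi => (hyS i hi).2.1
  exact ⟨_, isAllocation_piecewise hx hy hheld, sir_piecewise hsir hyA hunsat,
    paretoDominates_piecewise hne hyA hunsat⟩

end Reallocation

theorem sir_welfare_maximizing_core_stable_general {N H : Type*} [Fintype N]
    (M : HAInstance N H) (x : N → Option H)
    (hx : IsAllocation x) (hsir : SIR M x)
    (hmax : ∀ y : N → Option H, IsAllocation y → SIR M y →
      Welfare M y ≤ Welfare M x) :
    CoreStable M x := by
  intro S hB
  obtain ⟨z, hz, hzsir, hdom⟩ := hB.exists_paretoDominates hx hsir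
  exact (hmax z hz hzsir).not_gt hdom.welfare_lt

/-- Any S-IR allocation maximizing welfare among S-IR allocations
is core stable. -/
theorem sir_welfare_maximizing_core_stable {N H : Type*} [Fintype N] [Fintype H]
    (M : HAInstance N H) (x : N → Option H)
    (hx : IsAllocation x) (hsir : SIR M x)
    (hmax : ∀ y : N → Option H, IsAllocation y → SIR M y →
      Welfare M y ≤ Welfare M x) :
    CoreStable M x :=
  sir_welfare_maximizing_core_stable_general M x hx hsir hmax
end

section
/- For house allocation with existing tenants under dichotomous (1-0) preferences, the maximum number of satisfied agents over all individually rational allocations equals the maximum number of satisfied agents over all allocations; that is, imposing the individual rationality constraint does not reduce the maximum achievable welfare. -/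
/-! Repair violations of individual rationality one at a time: an unsatisfied agent whose
endowment `h` is acceptable takes `h` back and hands his current house to the previous holder
of `h`. Only that holder can lose his satisfaction while the agent gains his, so welfare does
not drop; and the number of agents keeping an acceptable endowment strictly grows, so the
repair ends in an individually rational allocation at least as good as the one we started from. -/

section

variable {N H : Type*} (M : HAInstance N H)

def keepers (x : N → Option H) : Set N := {k | x k = M.ω k ∧ Satisfied M x k}

open Classical in
noncomputable def exchange (x : N → Option H) (i : N) (h : H) : N → Option H :=
  fun k => if k = i then some h else if x k = some h then x i else x k

variable {M} {x : N → Option H} {i k : N} {h : H}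

lemma welfare_eq_ncard (x : N → Option H) : Welfare M x = {k | Satisfied M x k}.ncard :=
  (Nat.card_coe_set_eq _).symm

lemma welfare_le_card [Finite N] (x : N → Option H) : Welfare M x ≤ Nat.card N :=
  Finite.card_subtype_le _

lemma exchange_self : exchange x i h i = some h := by simp [exchange]

lemma exchange_of_ne (hki : k ≠ i) (hkh : x k ≠ some h) : exchange x i h k = x k := by
  simp [exchange, hki, hkh]

lemma isAllocation_exchange (hx : IsAllocation x) : IsAllocation (exchange x i h) := by
  intro a b g ha hb
  simp only [exchange] at ha hb
  split_ifs at ha hb <;> grind [IsAllocation]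

lemma welfare_le_exchange [Finite N] (hx : IsAllocation x) (hi : ¬ Satisfied M x i)
    (hh : h ∈ M.A i) : Welfare M x ≤ Welfare M (exchange x i h) := by
  set S := {k | Satisfied M x k}
  set T := {k | x k = some h}
  have hT : T.ncard ≤ 1 := (Set.ncard_le_one_iff).2 fun ha hb => hx _ _ h ha hb
  have hsub : insert i (S \ T) ⊆ {k | Satisfied M (exchange x i h) k} := by
    rintro k (rfl | ⟨hk, hkT⟩)
    · exact ⟨h, exchange_self, hh⟩
    · rwa [Set.mem_ofPred_eq, Satisfied, exchange_of_ne (ne_of_mem_of_not_mem hk hi) hkT]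
  rw [welfare_eq_ncard, welfare_eq_ncard]
  calc S.ncard ≤ (S \ T).ncard + T.ncard := Set.ncard_le_ncard_sdiff_add_ncard S T
    _ ≤ (insert i (S \ T)).ncard := by
        rw [Set.ncard_insert_of_notMem fun hiS => hi hiS.1]; omega
    _ ≤ _ := Set.ncard_le_ncard hsub

lemma ncard_keepers_lt_exchange [Finite N] (hi : ¬ Satisfied M x i) (hω : M.ω i = some h)
    (hh : h ∈ M.A i) : (keepers M x).ncard < (keepers M (exchange x i h)).ncard := by
  have hsub : insert i (keepers M x) ⊆ keepers M (exchange x i h) := by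
    rintro k (rfl | ⟨hkω, hk⟩)
    · exact ⟨exchange_self.trans hω.symm, h, exchange_self, hh⟩
    · have hki : k ≠ i := fun e => hi (e ▸ hk)
      -- `h` is the endowment of `i`, so nobody else can hold it as their own endowment.
      have hkh : x k ≠ some h := fun e => hki (M.ω_inj k i h (hkω ▸ e) hω)
      rw [keepers, Set.mem_ofPred_eq, Satisfied, exchange_of_ne hki hkh]
      exact ⟨hkω, hk⟩
  calc (keepers M x).ncard < (insert i (keepers M x)).ncard :=
        Set.ncard_lt_ncard (Set.ssubset_insert fun hik => hi hik.2)
    _ ≤ _ := Set.ncard_le_ncard hsub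

lemma exists_IR_welfare_le [Finite N] {x : N → Option H} (hx : IsAllocation x) :
    ∃ y, IsAllocation y ∧ IR M y ∧ Welfare M x ≤ Welfare M y := by
  by_cases hIR : IR M x
  · exact ⟨x, hx, hIR, le_rfl⟩
  obtain ⟨i, ⟨h, hω, hh⟩, hi⟩ : ∃ i, (∃ h, M.ω i = some h ∧ h ∈ M.A i) ∧ ¬ Satisfied M x i := by
    simpa only [IR, not_forall, Classical.not_imp, exists_prop] using hIR
  have hlt := ncard_keepers_lt_exchange hi hω hh
  obtain ⟨y, hy, hyIR, hle⟩ := exists_IR_welfare_le (isAllocation_exchange (i := i) (h := h) hx)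
  exact ⟨y, hy, hyIR, (welfare_le_exchange hx hi hh).trans hle⟩
termination_by Nat.card N - (keepers M x).ncard
decreasing_by
  exact Nat.sub_lt_sub_left (hlt.trans_le (Set.ncard_le_card _)) hlt

end

theorem max_ir_welfare_eq_max_welfare_general {N H : Type*} [Fintype N]
    (M : HAInstance N H) :
    sSup {w : ℕ | ∃ x : N → Option H, IsAllocation x ∧ IR M x ∧ Welfare M x = w} =
      sSup {w : ℕ | ∃ x : N → Option H, IsAllocation x ∧ Welfare M x = w} := by
  have hbdd : BddAbove (Set.range (Welfare M)) :=
    ⟨Nat.card N, by rintro _ ⟨x, rfl⟩; exact welfare_le_card x⟩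
  have hnone : IsAllocation (fun _ : N => (none : Option H)) := fun _ _ _ h => by simp at h
  obtain ⟨y₀, hy₀, hy₀IR, -⟩ := exists_IR_welfare_le (M := M) hnone
  apply le_antisymm
  · refine csSup_le_csSup (hbdd.mono ?_) ⟨_, y₀, hy₀, hy₀IR, rfl⟩ ?_
    · rintro _ ⟨x, -, rfl⟩; exact ⟨x, rfl⟩
    · rintro _ ⟨x, hx, -, rfl⟩; exact ⟨x, hx, rfl⟩
  · refine csSup_le ⟨_, y₀, hy₀, rfl⟩ ?_
    rintro _ ⟨x, hx, rfl⟩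
    obtain ⟨y, hy, hyIR, hle⟩ := exists_IR_welfare_le (M := M) hx
    refine le_csSup_of_le (hbdd.mono ?_) ⟨y, hy, hyIR, rfl⟩ hle
    rintro _ ⟨x, -, -, rfl⟩; exact ⟨x, rfl⟩

/-- The maximum welfare over IR allocations equals the maximum
welfare over all allocations. -/
theorem max_ir_welfare_eq_max_welfare {N H : Type*} [Fintype N] [Fintype H]
    (M : HAInstance N H) :
    sSup {w : ℕ | ∃ x : N → Option H, IsAllocation x ∧ IR M x ∧ Welfare M x = w} =
      sSup {w : ℕ | ∃ x : N → Option H, IsAllocation x ∧ Welfare M x = w} :=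
  max_ir_welfare_eq_max_welfare_general M
end

section
/- For house allocation with existing tenants under dichotomous (1-0) preferences, for every allocation x there exists an individually rational allocation y whose number of satisfied agents is at least the number of agents satisfied by x. -/
/-!
If an agent `i` with an acceptable endowment `h` is unsatisfied, give `h` to `i` and evict its
current holder. Welfare does not drop, since `i` gains and at most the holder loses; and the set of
agents occupying their own endowment strictly grows, since the evicted holder was not occupying
its own (endowments are distinct). Repeating this step therefore ends in an IR allocation.
-/

section

variable {N H : Type*}

open Classical in
noncomputable def reassign (x : N → Option H) (i : N) (h : H) : N → Option H :=
  fun j => if j = i then some h else if x j = some h then none else x j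

def endowmentKeepers (M : HAInstance N H) (x : N → Option H) : Set N :=
  {j | ∃ h, M.ω j = some h ∧ x j = some h}

variable {x : N → Option H} {i : N} {h : H}

theorem reassign_self : reassign x i h i = some h := if_pos rfl

theorem reassign_of_ne {j : N} (hji : j ≠ i) (hj : x j ≠ some h) : reassign x i h j = x j := by
  simp only [reassign, if_neg hji, if_neg hj]

theorem IsAllocation.reassign (hx : IsAllocation x) : IsAllocation (reassign x i h) := by
  intro a b g ha hb
  simp only [_root_.reassign] at ha hb
  split_ifs at ha hb <;> simp_all [hx a b g]

theorem welfare_le_welfare_reassign [Finite N] (M : HAInstance N H) (hx : IsAllocation x)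
    (hi : ¬ Satisfied M x i) (hh : h ∈ M.A i) : Welfare M x ≤ Welfare M (reassign x i h) := by
  classical
  have hne : ∀ j, Satisfied M x j → j ≠ i := fun j hj hji => hi (hji ▸ hj)
  -- The evicted holder of `h` is charged to `i`; everyone else stays satisfied.
  refine Set.ncard_le_ncard_of_injOn (s := {j | Satisfied M x j})
    (t := {j | Satisfied M (reassign x i h) j}) (fun j => if x j = some h then i else j) ?_ ?_
  · intro j hj
    by_cases hjh : x j = some h
    · simpa only [if_pos hjh] using ⟨h, reassign_self, hh⟩
    · obtain ⟨g, hg, hgA⟩ := hj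
      simpa only [if_neg hjh] using ⟨g, (reassign_of_ne (hne j ⟨g, hg, hgA⟩) hjh).trans hg, hgA⟩
  · intro a ha b hb hab
    by_cases hah : x a = some h <;> by_cases hbh : x b = some h <;>
      simp only [hah, hbh, if_true, if_false] at hab
    · exact hx a b h hah hbh
    · exact absurd hab.symm (hne b hb)
    · exact absurd hab (hne a ha)
    · exact hab

theorem endowmentKeepers_ssubset_reassign (M : HAInstance N H) (hωi : M.ω i = some h)
    (hxi : x i ≠ some h) : endowmentKeepers M x ⊂ endowmentKeepers M (reassign x i h) := by
  refine (Set.ssubset_iff_of_subset ?_).mpr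
    ⟨i, ⟨h, hωi, reassign_self⟩, fun ⟨g, hg, hxg⟩ => hxi (hxg.trans (hg.symm.trans hωi))⟩
  rintro j ⟨g, hωj, hxj⟩
  refine ⟨g, hωj, ?_⟩
  have hji : j ≠ i := by
    rintro rfl
    exact hxi (hxj.trans (hωj.symm.trans hωi))
  have hjh : x j ≠ some h := fun hxh => hji (M.ω_inj j i h (hωj.trans (hxj.symm.trans hxh)) hωi)
  exact (reassign_of_ne hji hjh).trans hxj

end

/-- For every allocation there is an IR allocation with at least
as much welfare. -/
theorem exists_ir_with_ge_welfare {N H : Type*} [Fintype N]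
    (M : HAInstance N H) (x : N → Option H) (hx : IsAllocation x) :
    ∃ y : N → Option H, IsAllocation y ∧ IR M y ∧
      Welfare M x ≤ Welfare M y := by
  by_cases hIR : IR M x
  · exact ⟨x, hx, hIR, le_rfl⟩
  simp only [IR, not_forall, exists_prop] at hIR
  obtain ⟨i, ⟨h, hωi, hh⟩, hi⟩ := hIR
  obtain ⟨y, hy, hIRy, hxy⟩ := exists_ir_with_ge_welfare M (reassign x i h) hx.reassign
  exact ⟨y, hy, hIRy, (welfare_le_welfare_reassign M hx hi hh).trans hxy⟩
termination_by Fintype.card N - (endowmentKeepers M x).ncard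
decreasing_by
  have hlt := Set.ncard_lt_ncard (endowmentKeepers_ssubset_reassign M hωi
    fun hxi => hi ⟨h, hxi, hh⟩) (Set.toFinite _)
  have hle := Set.ncard_le_card (endowmentKeepers M (reassign x i h))
  rw [Nat.card_eq_fintype_card] at hle
  omega
end

section
/- For house allocation with existing tenants under dichotomous (1-0) preferences, any individually rational allocation that maximizes the number of satisfied agents among all individually rational allocations also maximizes the number of satisfied agents among all allocations. -/
/-! Given any allocation `y`, let `D` be a set of agents with acceptable endowments containing
exactly those such agents who are unsatisfied under `y` or who hold, under `y`, a house endowed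
by a member of `D` (a fixed point of a monotone operator, so one exists). Returning every member
of `D` its endowment and evicting the current holders of those houses yields an IR allocation.
Each satisfied agent who is evicted is charged to the owner of the house he held, a member of `D`
who is now satisfied; satisfied members of `D` are themselves evicted, so this charging is
injective and welfare does not drop. -/

namespace HAInstance

variable {N H : Type*} (M : HAInstance N H)

def holdersOfEndowments (y : N → Option H) (D : Set N) : Set N :=
  {i | ∃ k ∈ D, ∃ h, y i = some h ∧ M.ω k = some h}

theorem holdersOfEndowments_mono (y : N → Option H) : Monotone (M.holdersOfEndowments y) := by
  rintro D D' hDD' i ⟨k, hk, h, hyi, hωk⟩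
  exact ⟨k, hDD' hk, h, hyi, hωk⟩

/-- `Satisfied M M.ω i` says that `i` has an acceptable endowment. -/
def reclaimStep (y : N → Option H) : Set N →o Set N where
  toFun D := {i | Satisfied M M.ω i ∧ (¬ Satisfied M y i ∨ i ∈ M.holdersOfEndowments y D)}
  monotone' _ _ hDD' _ := And.imp_right (Or.imp_right (M.holdersOfEndowments_mono y hDD' ·))

open Classical in
noncomputable def reclaim (y : N → Option H) (D : Set N) : N → Option H := fun i =>
  if i ∈ D then M.ω i else if i ∈ M.holdersOfEndowments y D then none else y i

variable {M} {y : N → Option H} {D : Set N} {i : N}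

theorem reclaim_of_mem (hi : i ∈ D) : M.reclaim y D i = M.ω i := if_pos hi

theorem reclaim_of_notMem (hiD : i ∉ D) (hiE : i ∉ M.holdersOfEndowments y D) :
    M.reclaim y D i = y i := by
  simp only [reclaim, if_neg hiD, if_neg hiE]

theorem reclaim_eq_some {h : H} (hi : M.reclaim y D i = some h) :
    (i ∈ D ∧ M.ω i = some h) ∨ (i ∉ D ∧ i ∉ M.holdersOfEndowments y D ∧ y i = some h) := by
  unfold reclaim at hi
  split_ifs at hi with hiD hiE
  · exact .inl ⟨hiD, hi⟩
  · exact .inr ⟨hiD, hiE, hi⟩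

theorem isAllocation_reclaim (hy : IsAllocation y) : IsAllocation (M.reclaim y D) := by
  intro i j h hi hj
  rcases reclaim_eq_some hi with ⟨hiD, hωi⟩ | ⟨hiD, hiE, hyi⟩ <;>
    rcases reclaim_eq_some hj with ⟨hjD, hωj⟩ | ⟨hjD, hjE, hyj⟩
  · exact M.ω_inj i j h hωi hωj
  · exact absurd ⟨i, hiD, h, hyj, hωi⟩ hjE
  · exact absurd ⟨j, hjD, h, hyi, hωj⟩ hiE
  · exact hy i j h hyi hyj

theorem satisfied_reclaim_of_notMem (hiD : i ∉ D) (hiE : i ∉ M.holdersOfEndowments y D)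
    (hsat : Satisfied M y i) : Satisfied M (M.reclaim y D) i := by
  simpa only [Satisfied, reclaim_of_notMem hiD hiE] using hsat

section FixedPoint

variable (hD : Function.IsFixedPt (M.reclaimStep y) D)
include hD

theorem mem_iff_of_isFixedPt :
    i ∈ D ↔ Satisfied M M.ω i ∧ (¬ Satisfied M y i ∨ i ∈ M.holdersOfEndowments y D) :=
  (Set.ext_iff.mp hD i).symm

theorem satisfied_reclaim_of_mem (hi : i ∈ D) : Satisfied M (M.reclaim y D) i := by
  simpa only [Satisfied, reclaim_of_mem hi] using ((mem_iff_of_isFixedPt hD).mp hi).1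

theorem mem_holdersOfEndowments_of_mem (hi : i ∈ D) (hsat : Satisfied M y i) :
    i ∈ M.holdersOfEndowments y D :=
  ((mem_iff_of_isFixedPt hD).mp hi).2.resolve_left (not_not_intro hsat)

theorem ir_reclaim : IR M (M.reclaim y D) := by
  intro i hωi
  by_cases hiD : i ∈ D
  · exact satisfied_reclaim_of_mem hD hiD
  · have hiD' := (mem_iff_of_isFixedPt hD).not.mp hiD
    exact satisfied_reclaim_of_notMem hiD (fun hiE ↦ hiD' ⟨hωi, .inr hiE⟩)
      (by_contra fun hsat ↦ hiD' ⟨hωi, .inl hsat⟩)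

theorem welfare_le_welfare_reclaim [Finite N] (hy : IsAllocation y) :
    Welfare M y ≤ Welfare M (M.reclaim y D) := by
  classical
  set E := M.holdersOfEndowments y D
  choose owner howner_mem howner using fun i (hi : i ∈ E) ↦ hi
  let g : N → N := fun i ↦ if hi : i ∈ E then owner i hi else i
  have hg_sat : ∀ i, Satisfied M y i → Satisfied M (M.reclaim y D) (g i) := by
    intro i hsat
    by_cases hiE : i ∈ E
    · simpa only [g, dif_pos hiE] using satisfied_reclaim_of_mem hD (howner_mem i hiE)
    · simp only [g, dif_neg hiE]
      by_cases hiD : i ∈ D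
      · exact satisfied_reclaim_of_mem hD hiD
      · exact satisfied_reclaim_of_notMem hiD hiE hsat
  have hg_inj : Set.InjOn g {i | Satisfied M y i} := by
    intro i hi j hj hij
    by_cases hiE : i ∈ E <;> by_cases hjE : j ∈ E <;>
      simp only [g, dif_pos, dif_neg, hiE, hjE, not_false_eq_true] at hij
    · obtain ⟨h, hyi, hωi⟩ := howner i hiE
      obtain ⟨h', hyj, hωj⟩ := howner j hjE
      rw [hij, hωj, Option.some_inj] at hωi
      exact hy i j h hyi (hωi ▸ hyj)
    · exact absurd (mem_holdersOfEndowments_of_mem hD (hij ▸ howner_mem i hiE) hj) hjE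
    · exact absurd (mem_holdersOfEndowments_of_mem hD (hij ▸ howner_mem j hjE) hi) hiE
    · exact hij
  exact Nat.card_le_card_of_injective (fun i ↦ ⟨g i, hg_sat i i.2⟩)
    fun i j hij ↦ Subtype.ext (hg_inj i.2 j.2 (congrArg Subtype.val hij))

end FixedPoint

variable (M) in
theorem exists_ir_welfare_ge [Finite N] (hy : IsAllocation y) :
    ∃ y', IsAllocation y' ∧ IR M y' ∧ Welfare M y ≤ Welfare M y' :=
  have hD := (M.reclaimStep y).isFixedPt_lfp
  ⟨_, isAllocation_reclaim hy, ir_reclaim hD, welfare_le_welfare_reclaim hD hy⟩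

end HAInstance

theorem ir_welfare_maximizing_is_welfare_maximizing_general {N H : Type*}
    [Fintype N]
    (M : HAInstance N H) (x : N → Option H)
    (hmax : ∀ y : N → Option H, IsAllocation y → IR M y →
      Welfare M y ≤ Welfare M x) :
    ∀ y : N → Option H, IsAllocation y → Welfare M y ≤ Welfare M x := by
  intro y hy
  obtain ⟨y', hy', hir', hle⟩ := M.exists_ir_welfare_ge hy
  exact hle.trans (hmax y' hy' hir')

/-- Any IR allocation maximizing welfare among IR allocations
maximizes welfare among all allocations. -/
theorem ir_welfare_maximizing_is_welfare_maximizing {N H : Type*}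
    [Fintype N] [Fintype H]
    (M : HAInstance N H) (x : N → Option H)
    (hx : IsAllocation x) (hir : IR M x)
    (hmax : ∀ y : N → Option H, IsAllocation y → IR M y →
      Welfare M y ≤ Welfare M x) :
    ∀ y : N → Option H, IsAllocation y → Welfare M y ≤ Welfare M x :=
  ir_welfare_maximizing_is_welfare_maximizing_general M x hmax
end

section
/- There exists an instance of house allocation with existing tenants under dichotomous (1-0) preferences and an individually rational allocation that maximizes the number of satisfied agents among all individually rational allocations but is not core stable. (For example: four agents 1,2,3,4, each endowed with a house unacceptable to himself, where agent 2's house is acceptable to agents 4 and 1, agent 1's house is acceptable to agents 2 and 3, and the allocation giving agent 1's house to agent 3 and agent 2's house to agent 4 is IR and satisfies the maximum number of agents, yet the coalition {1,2} blocks it.) -/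
/-! Four agents, each endowed with the house of his own index: agents `0` and `1` want each
other's house, agent `2` wants house `0` and agent `3` wants house `1`. Nobody likes his own
house, so every allocation is IR, and only the two holders of houses `0` and `1` can be
satisfied. Handing these houses to agents `2` and `3` reaches that maximum but leaves `0` and
`1` unsatisfied, and they block by swapping. -/

section General

variable {N H : Type*} (M : HAInstance N H)

theorem ir_of_forall_endowment_not_mem_A (hω : ∀ i h, M.ω i = some h → h ∉ M.A i)
    (x : N → Option H) : IR M x := by
  rintro i ⟨h, hωi, hA⟩
  exact absurd hA (hω i h hωi)

theorem welfare_le_card_iUnion_A [Finite H] {y : N → Option H} (hy : IsAllocation y) :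
    Welfare M y ≤ Nat.card (⋃ i, M.A i) := by
  choose house hy_house hA_house using fun s : {i // Satisfied M y i} => s.2
  refine Nat.card_le_card_of_injective
    (fun s => ⟨house s, Set.mem_iUnion_of_mem s.1 (hA_house s)⟩) fun s t hst => ?_
  have hst : house s = house t := congrArg Subtype.val hst
  exact Subtype.ext (hy s.1 t.1 (house t) (hst ▸ hy_house s) (hy_house t))

end General

namespace SwapExample

def market : HAInstance (Fin 4) (Fin 4) where
  ω := some
  A := ![{1}, {0}, {0}, {1}]
  ω_inj := by simp

def alloc : Fin 4 → Option (Fin 4) := ![none, none, some 0, some 1]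

theorem isAllocation_alloc : IsAllocation alloc := by
  unfold IsAllocation
  decide

theorem ir_alloc : IR market alloc :=
  ir_of_forall_endowment_not_mem_A _ (by rintro i h ⟨⟩; fin_cases i <;> simp [market]) _

theorem satisfied_alloc_iff (i : Fin 4) : Satisfied market alloc i ↔ i = 2 ∨ i = 3 := by
  fin_cases i <;> simp [Satisfied, market, alloc]

theorem welfare_alloc : Welfare market alloc = 2 := by
  rw [Welfare, Nat.card_congr (Equiv.subtypeEquivRight satisfied_alloc_iff)]
  simp only [Nat.card_eq_fintype_card]
  rfl

theorem iUnion_A : ⋃ i, market.A i = {0, 1} := by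
  simp [market, Set.ext_iff, Fin.exists_fin_succ]

theorem blocks_alloc : Blocks market alloc {0, 1} := by
  have swap_injOn : Set.InjOn (![1, 0, 0, 0] : Fin 4 → Fin 4) ({0, 1} : Set (Fin 4)) :=
    (Set.injOn_insert (by simp)).2 ⟨Set.injOn_singleton _ _, by simp⟩
  refine ⟨⟨0, by simp⟩, ![1, 0, 0, 0], swap_injOn, ?_⟩
  rintro i (rfl | rfl) <;> simp [Satisfied, market, alloc]

end SwapExample

open SwapExample in
/-- There exists an instance and an IR welfare-maximizing (among
IR allocations) allocation that is not core stable. -/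
theorem exists_ir_welfare_maximizing_not_core_stable :
    ∃ (N H : Type) (_ : Fintype N) (_ : Fintype H) (M : HAInstance N H)
      (x : N → Option H), IsAllocation x ∧ IR M x ∧
        (∀ y : N → Option H, IsAllocation y → IR M y →
          Welfare M y ≤ Welfare M x) ∧
        ¬ CoreStable M x := by
  refine ⟨Fin 4, Fin 4, inferInstance, inferInstance, market, alloc, isAllocation_alloc,
    ir_alloc, fun y hy _ => ?_, fun hcore => hcore _ blocks_alloc⟩
  calc Welfare market y ≤ Nat.card (⋃ i, market.A i) := welfare_le_card_iUnion_A _ hy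
    _ = 2 := by rw [iUnion_A, Nat.card_eq_fintype_card]; rfl
    _ = Welfare market alloc := welfare_alloc.symm
end

section
/- Every instance of house allocation with existing tenants under dichotomous preferences admits a core-stable allocation; in particular, the core is nonempty. -/
section

variable {N H : Type*} (M : HAInstance N H)

def UnsatisfiedKeepEndowment (x : N → Option H) : Prop :=
  ∀ i, ¬ Satisfied M x i → x i = M.ω i

lemma unsatisfiedKeepEndowment_endowment : UnsatisfiedKeepEndowment M M.ω :=
  fun _ _ => rfl

variable {M}

lemma ParetoDominates.satisfied_ssubset {x y : N → Option H} (h : ParetoDominates M y x) :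
    {i | Satisfied M x i} ⊂ {i | Satisfied M y i} :=
  Set.ssubset_iff_subset_ne.mpr ⟨h.1, fun heq => by
    obtain ⟨i, hy, hx⟩ := h.2
    exact hx (heq ▸ hy : i ∈ {i | Satisfied M x i})⟩

lemma exists_not_paretoDominated [Finite N] {P : (N → Option H) → Prop} {x₀ : N → Option H}
    (h₀ : P x₀) : ∃ x, P x ∧ ∀ y, P y → ¬ ParetoDominates M y x := by
  obtain ⟨x, hx, hmax⟩ := (wellFounded_gt.onFun (f := fun x => {i | Satisfied M x i})).has_min
    {x | P x} ⟨x₀, h₀⟩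
  exact ⟨x, hx, fun y hy hdom => hmax y hy hdom.satisfied_ssubset⟩

section Blocking

variable {x : N → Option H} {S : Set N}

lemma IsAllocation.mem_of_eq_endowment (hx : IsAllocation x) (hkeep : UnsatisfiedKeepEndowment M x)
    (hS : ∀ i ∈ S, ¬ Satisfied M x i) {j k : N} {h : H} (hk : k ∈ S) (hωk : M.ω k = some h)
    (hj : x j = some h) : j ∈ S :=
  hx j k h hj ((hkeep k (hS k hk)).trans hωk) ▸ hk

lemma Blocks.exists_paretoDominates_s11 (hx : IsAllocation x) (hkeep : UnsatisfiedKeepEndowment M x)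
    (hblock : Blocks M x S) :
    ∃ x', IsAllocation x' ∧ UnsatisfiedKeepEndowment M x' ∧ ParetoDominates M x' x := by
  classical
  obtain ⟨⟨i₀, hi₀⟩, y, hyinj, hy⟩ := hblock
  have hunsat : ∀ i ∈ S, ¬ Satisfied M x i := fun i hi => (hy i hi).2.2
  have hforeign : ∀ i ∈ S, ∀ j ∉ S, x j ≠ some (y i) := fun i hi j hj hxj => by
    obtain ⟨⟨k, hk, hωk⟩, -⟩ := hy i hi
    exact hj (hx.mem_of_eq_endowment hkeep hunsat hk hωk hxj)
  set x' := S.piecewise (fun i => some (y i)) x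
  have hx'_mem : ∀ i ∈ S, x' i = some (y i) := fun i hi => S.piecewise_eq_of_mem _ _ hi
  have hx'_not_mem : ∀ i ∉ S, x' i = x i := fun i hi => S.piecewise_eq_of_notMem _ _ hi
  have hsat_mem : ∀ i ∈ S, Satisfied M x' i := fun i hi => ⟨y i, hx'_mem i hi, (hy i hi).2.1⟩
  have hsat_not_mem : ∀ i ∉ S, (Satisfied M x' i ↔ Satisfied M x i) := fun i hi => by
    simp only [Satisfied, hx'_not_mem i hi]
  refine ⟨x', fun i j h hi hj => ?_, fun i hi => ?_, fun i hxi => ?_, i₀, hsat_mem i₀ hi₀, hunsat i₀ hi₀⟩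
  · by_cases hiS : i ∈ S <;> by_cases hjS : j ∈ S <;>
      simp only [hx'_mem, hx'_not_mem, hiS, hjS, not_false_eq_true, Option.some_inj] at hi hj
    · exact hyinj hiS hjS (hi.trans hj.symm)
    · exact absurd (hi ▸ hj) (hforeign i hiS j hjS)
    · exact absurd (hj ▸ hi) (hforeign j hjS i hiS)
    · exact hx i j h hi hj
  · have hiS : i ∉ S := fun hiS => hi (hsat_mem i hiS)
    rw [hx'_not_mem i hiS]
    exact hkeep i (mt (hsat_not_mem i hiS).mpr hi)
  · by_cases hiS : i ∈ S
    · exact hsat_mem i hiS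
    · exact (hsat_not_mem i hiS).mpr hxi

end Blocking

end

theorem exists_core_stable_allocation_general {N H : Type*}
    [Fintype N] (M : HAInstance N H) :
    ∃ x : N → Option H, IsAllocation x ∧ CoreStable M x := by
  obtain ⟨x, ⟨hx, hkeep⟩, hmax⟩ := exists_not_paretoDominated (M := M)
    (P := fun x => IsAllocation x ∧ UnsatisfiedKeepEndowment M x)
    ⟨M.ω_inj, unsatisfiedKeepEndowment_endowment M⟩
  refine ⟨x, hx, fun S hS => ?_⟩
  obtain ⟨x', hx', hkeep', hdom⟩ := hS.exists_paretoDominates_s11 hx hkeep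
  exact hmax x' ⟨hx', hkeep'⟩ hdom

/-- Every instance admits a core-stable allocation. -/
theorem exists_core_stable_allocation {N H : Type*}
    [Fintype N] [Fintype H] (M : HAInstance N H) :
    ∃ x : N → Option H, IsAllocation x ∧ CoreStable M x :=
  exists_core_stable_allocation_general M
end
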